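/- Let (T_t) be a positivity-preserving standard semigroup and P_y its subordinated Poisson semigroup. Then for every f ≥ 0 and 0 < t ≤ y: (i) (P_y f)/y ≤ (P_t f)/t pointwise, and (ii) |(P_y − P_{y+t}) f| ≤ (8t/y) P_{y/2} f pointwise. -/

import Mathlib

/-!
Write `k_u(y) = y e^{-y²/(4u)}`, so that `P_y f = (2√π)⁻¹ ∫_0^∞ k_u(y) u^{-3/2} T_u f du`
with `T_u f ≥ 0`. Both inequalities are integrated pointwise inequalities between kernels.
For (i), `k_u(y) / y = e^{-y²/(4u)}` decreases in `y`. For (ii), with `b = s²/(4u)`,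
`|k_u'(s)| = e^{-b} |1 - 2b| ≤ e^{-b} (1 + 2b) ≤ 4 e^{-b/4}`, which for `s ≥ y` is at most
`4 e^{-y²/(16u)} = (8/y) k_u(y/2)`; the mean value theorem on `[y, y + t]` concludes.
-/

open MeasureTheory Set

noncomputable def subordinationKernel (u y : ℝ) : ℝ := y * Real.exp (-(y ^ 2) / (4 * u))

noncomputable def subordinationIntegrand (g : ℝ → ℝ) (y u : ℝ) : ℝ :=
  subordinationKernel u y * u ^ (-(3 : ℝ) / 2) * g u

lemma exp_neg_mul_one_add_two_mul_le {b : ℝ} (hb : 0 ≤ b) :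
    Real.exp (-b) * (1 + 2 * b) ≤ 4 * Real.exp (-b / 4) := by
  have h : 1 + 2 * b ≤ 4 * Real.exp (3 * b / 4) := by
    nlinarith [Real.add_one_le_exp (3 * b / 4)]
  calc Real.exp (-b) * (1 + 2 * b) ≤ Real.exp (-b) * (4 * Real.exp (3 * b / 4)) := by gcongr
    _ = 4 * Real.exp (-b / 4) := by rw [mul_left_comm, ← Real.exp_add]; ring_nf

section Kernel

variable {u t y : ℝ}

lemma mul_subordinationKernel_le (hu : 0 < u) (ht : 0 ≤ t) (hty : t ≤ y) :
    t * subordinationKernel u y ≤ y * subordinationKernel u t := by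
  calc t * subordinationKernel u y = t * y * Real.exp (-(y ^ 2) / (4 * u)) := by
        rw [subordinationKernel]; ring
    _ ≤ t * y * Real.exp (-(t ^ 2) / (4 * u)) := by gcongr; exact mul_nonneg ht (ht.trans hty)
    _ = y * subordinationKernel u t := by rw [subordinationKernel]; ring

lemma hasDerivAt_subordinationKernel (u s : ℝ) :
    HasDerivAt (subordinationKernel u)
      (Real.exp (-(s ^ 2) / (4 * u)) * (1 - s ^ 2 / (2 * u))) s := by
  have hexponent : HasDerivAt (fun s : ℝ => -(s ^ 2) / (4 * u)) (-(2 * s) / (4 * u)) s := by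
    simpa using (hasDerivAt_pow 2 s).neg.div_const (4 * u)
  refine ((hasDerivAt_id' s).mul hexponent.exp).congr_deriv ?_
  ring

lemma abs_deriv_subordinationKernel_le {s : ℝ} (hu : 0 < u) (hy : 0 ≤ y) (hys : y ≤ s) :
    |Real.exp (-(s ^ 2) / (4 * u)) * (1 - s ^ 2 / (2 * u))| ≤
      4 * Real.exp (-(y ^ 2) / (16 * u)) := by
  set b := s ^ 2 / (4 * u) with hb
  have hb0 : 0 ≤ b := by positivity
  have hexp : Real.exp (-(s ^ 2) / (4 * u)) = Real.exp (-b) := by rw [hb, neg_div]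
  have hlin : s ^ 2 / (2 * u) = 2 * b := by rw [hb]; ring
  have hdecay : Real.exp (-b / 4) ≤ Real.exp (-(y ^ 2) / (16 * u)) := by
    have hsq : y ^ 2 ≤ s ^ 2 := pow_le_pow_left₀ hy hys 2
    have hquarter : -b / 4 = -(s ^ 2) / (16 * u) := by rw [hb]; ring
    rw [hquarter]
    gcongr
  rw [hexp, hlin, abs_mul, abs_of_pos (Real.exp_pos _)]
  calc Real.exp (-b) * |1 - 2 * b| ≤ Real.exp (-b) * (1 + 2 * b) := by
        gcongr; exact abs_le.mpr ⟨by linarith, by linarith⟩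
    _ ≤ 4 * Real.exp (-b / 4) := exp_neg_mul_one_add_two_mul_le hb0
    _ ≤ 4 * Real.exp (-(y ^ 2) / (16 * u)) := by gcongr

lemma abs_subordinationKernel_sub_le (hu : 0 < u) (hy : 0 < y) (ht : 0 ≤ t) :
    |subordinationKernel u y - subordinationKernel u (y + t)| ≤
      8 * t / y * subordinationKernel u (y / 2) := by
  have hmvt := norm_image_sub_le_of_norm_deriv_le_segment'
    (fun s _ => (hasDerivAt_subordinationKernel u s).hasDerivWithinAt)
    (fun s hs => abs_deriv_subordinationKernel_le hu hy.le hs.1) (y + t)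
    ⟨by linarith, le_rfl⟩
  rw [Real.norm_eq_abs, abs_sub_comm] at hmvt
  calc |subordinationKernel u y - subordinationKernel u (y + t)|
      ≤ 4 * Real.exp (-(y ^ 2) / (16 * u)) * (y + t - y) := hmvt
    _ = 8 * t / y * subordinationKernel u (y / 2) := by
        rw [subordinationKernel]; field_simp; ring_nf

end Kernel

section Integrand

variable {g : ℝ → ℝ} {u t y : ℝ}

lemma mul_subordinationIntegrand_le (hu : 0 < u) (hg : 0 ≤ g u) (ht : 0 ≤ t) (hty : t ≤ y) :
    t * subordinationIntegrand g y u ≤ y * subordinationIntegrand g t u := by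
  have hw : 0 ≤ u ^ (-(3 : ℝ) / 2) * g u := by positivity
  unfold subordinationIntegrand
  linear_combination mul_le_mul_of_nonneg_right (mul_subordinationKernel_le hu ht hty) hw

lemma abs_subordinationIntegrand_sub_le (hu : 0 < u) (hg : 0 ≤ g u) (hy : 0 < y) (ht : 0 ≤ t) :
    |subordinationIntegrand g y u - subordinationIntegrand g (y + t) u| ≤
      8 * t / y * subordinationIntegrand g (y / 2) u := by
  have hw : 0 ≤ u ^ (-(3 : ℝ) / 2) * g u := by positivity
  unfold subordinationIntegrand
  calc |subordinationKernel u y * u ^ (-(3 : ℝ) / 2) * g u -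
        subordinationKernel u (y + t) * u ^ (-(3 : ℝ) / 2) * g u|
      = |(subordinationKernel u y - subordinationKernel u (y + t)) *
          (u ^ (-(3 : ℝ) / 2) * g u)| := by congr 1; ring
    _ ≤ 8 * t / y * subordinationKernel u (y / 2) * (u ^ (-(3 : ℝ) / 2) * g u) := by
        rw [abs_mul, abs_of_nonneg hw]
        gcongr
        exact abs_subordinationKernel_sub_le hu hy ht
    _ = _ := by ring

lemma mul_setIntegral_subordinationIntegrand_le (hg : ∀ u ∈ Ioi (0 : ℝ), 0 ≤ g u)
    (hyi : IntegrableOn (subordinationIntegrand g y) (Ioi 0))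
    (hti : IntegrableOn (subordinationIntegrand g t) (Ioi 0)) (ht : 0 ≤ t) (hty : t ≤ y) :
    t * ∫ u in Ioi 0, subordinationIntegrand g y u ≤
      y * ∫ u in Ioi 0, subordinationIntegrand g t u := by
  rw [← integral_const_mul, ← integral_const_mul]
  exact setIntegral_mono_on (hyi.const_mul t) (hti.const_mul y) measurableSet_Ioi
    fun u hu => mul_subordinationIntegrand_le hu (hg u hu) ht hty

lemma abs_setIntegral_subordinationIntegrand_sub_le (hg : ∀ u ∈ Ioi (0 : ℝ), 0 ≤ g u)
    (hyi : IntegrableOn (subordinationIntegrand g y) (Ioi 0))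
    (hyti : IntegrableOn (subordinationIntegrand g (y + t)) (Ioi 0))
    (hy2i : IntegrableOn (subordinationIntegrand g (y / 2)) (Ioi 0)) (hy : 0 < y) (ht : 0 ≤ t) :
    |(∫ u in Ioi 0, subordinationIntegrand g y u) -
        ∫ u in Ioi 0, subordinationIntegrand g (y + t) u| ≤
      8 * t / y * ∫ u in Ioi 0, subordinationIntegrand g (y / 2) u := by
  rw [← integral_sub hyi hyti, ← integral_const_mul]
  exact abs_integral_le_integral_abs.trans <|
    setIntegral_mono_on (hyi.sub hyti).abs (hy2i.const_mul _) measurableSet_Ioi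
      fun u hu => abs_subordinationIntegrand_sub_le hu (hg u hu) hy ht

end Integrand

theorem subordinated_poisson_pointwise_bounds_general
    {α : Type*}
    (T P : ℝ → (α → ℝ) → (α → ℝ))
    (hpos : ∀ t : ℝ, 0 ≤ t → ∀ f : α → ℝ, 0 ≤ f → 0 ≤ T t f)
    -- subordination formula defining `P`
    (hP : ∀ y : ℝ, 0 < y → ∀ f : α → ℝ, ∀ x,
      P y f x = (1 / (2 * Real.sqrt Real.pi)) *
        ∫ u in Ioi (0 : ℝ),
          y * Real.exp (-(y ^ 2) / (4 * u)) * u ^ (-(3 : ℝ) / 2) * T u f x)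
    -- integrability of the subordination integrand
    (hint : ∀ y : ℝ, 0 < y → ∀ f : α → ℝ, 0 ≤ f → ∀ x,
      IntegrableOn
        (fun u => y * Real.exp (-(y ^ 2) / (4 * u)) * u ^ (-(3 : ℝ) / 2) * T u f x)
        (Ioi (0 : ℝ)))
    (f : α → ℝ) (hf : 0 ≤ f) (t y : ℝ) (ht : 0 < t) (hty : t ≤ y) :
    (∀ x, P y f x / y ≤ P t f x / t) ∧
    (∀ x, |P y f x - P (y + t) f x| ≤ (8 * t / y) * P (y / 2) f x) := by
  have hy : 0 < y := ht.trans_le hty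
  have hc : 0 ≤ 1 / (2 * Real.sqrt Real.pi) := by positivity
  have hTf : ∀ x, ∀ u ∈ Ioi (0 : ℝ), 0 ≤ T u f x := fun x u hu => hpos u hu.le f hf x
  have hP' : ∀ s, 0 < s → ∀ x, P s f x = (1 / (2 * Real.sqrt Real.pi)) *
      ∫ u in Ioi 0, subordinationIntegrand (fun u => T u f x) s u := fun s hs => hP s hs f
  have hint' : ∀ s, 0 < s → ∀ x,
      IntegrableOn (subordinationIntegrand (fun u => T u f x) s) (Ioi 0) :=
    fun s hs => hint s hs f hf
  refine ⟨fun x => ?_, fun x => ?_⟩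
  · rw [div_le_div_iff₀ hy ht, hP' y hy, hP' t ht]
    linear_combination mul_le_mul_of_nonneg_left (mul_setIntegral_subordinationIntegrand_le
      (hTf x) (hint' y hy x) (hint' t ht x) ht.le hty) hc
  · have hyt : 0 < y + t := by linarith
    have hy2 : 0 < y / 2 := by linarith
    rw [hP' y hy, hP' (y + t) hyt, hP' (y / 2) hy2, ← mul_sub, abs_mul, abs_of_nonneg hc,
      mul_left_comm]
    gcongr
    exact abs_setIntegral_subordinationIntegrand_sub_le (hTf x) (hint' y hy x)
      (hint' (y + t) hyt x) (hint' (y / 2) hy2 x) hy ht.le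

/-- Let `(T_t)` be a positivity-preserving standard semigroup and `P_y` its
subordinated Poisson semigroup, given by the subordination formula
`P_y f = (1/(2√π)) ∫_0^∞ y e^{−y²/(4u)} u^{−3/2} T_u f du`. Then for every
`f ≥ 0` and `0 < t ≤ y`: (i) `(P_y f)/y ≤ (P_t f)/t` pointwise, and
(ii) `|(P_y − P_{y+t}) f| ≤ (8t/y) P_{y/2} f` pointwise. -/
theorem subordinated_poisson_pointwise_bounds
    {α : Type*} [MeasurableSpace α] (μ : Measure α) [SigmaFinite μ]
    (T P : ℝ → (α → ℝ) → (α → ℝ))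
    -- (T_t) is a positivity-preserving standard semigroup
    (hsemi : ∀ s t : ℝ, 0 ≤ s → 0 ≤ t → T (s + t) = T s ∘ T t)
    (hT0 : T 0 = id)
    (hpos : ∀ t : ℝ, 0 ≤ t → ∀ f : α → ℝ, 0 ≤ f → 0 ≤ T t f)
    (hunital : ∀ t : ℝ, 0 ≤ t → T t 1 = 1)
    -- subordination formula defining `P`
    (hP : ∀ y : ℝ, 0 < y → ∀ f : α → ℝ, ∀ x,
      P y f x = (1 / (2 * Real.sqrt Real.pi)) *
        ∫ u in Ioi (0 : ℝ),
          y * Real.exp (-(y ^ 2) / (4 * u)) * u ^ (-(3 : ℝ) / 2) * T u f x)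
    -- integrability of the subordination integrand
    (hint : ∀ y : ℝ, 0 < y → ∀ f : α → ℝ, 0 ≤ f → ∀ x,
      IntegrableOn
        (fun u => y * Real.exp (-(y ^ 2) / (4 * u)) * u ^ (-(3 : ℝ) / 2) * T u f x)
        (Ioi (0 : ℝ)))
    (f : α → ℝ) (hf : 0 ≤ f) (t y : ℝ) (ht : 0 < t) (hty : t ≤ y) :
    (∀ x, P y f x / y ≤ P t f x / t) ∧
    (∀ x, |P y f x - P (y + t) f x| ≤ (8 * t / y) * P (y / 2) f x) :=
  subordinated_poisson_pointwise_bounds_general T P hpos hP hint f hf t y ht hty
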